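/- arXiv:quant-ph/0606202 — 4 statements merged into one kernel-verified Lean document; each statement's English description precedes it below -/
import Mathlib

section
/- The maximum pairwise column total variation distance of a stochastic matrix is submultiplicative: if d̄(t) := max_{x,x'} (1/2)‖Q^t(·,x) − Q^t(·,x')‖₁ for a column-stochastic matrix Q, then d̄(s+t) ≤ d̄(s)·d̄(t) for all nonnegative integers s, t. -/
open Finset

/-- Contraction: a matrix with pairwise column TV distance ≤ D contracts
zero-sum vectors in (half) ℓ¹ norm by factor D. -/
lemma tv_contract {N : ℕ} (P : Matrix (Fin N) (Fin N) ℝ) (D : ℝ)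
    (hD : ∀ x x' : Fin N, (1/2) * ∑ y, |P y x - P y x'| ≤ D)
    (v : Fin N → ℝ) (hv : ∑ x, v x = 0) :
    (1/2) * ∑ y, |∑ x, P y x * v x| ≤ D * ((1/2) * ∑ x, |v x|) := by
  set vp : Fin N → ℝ := fun x => (|v x| + v x) / 2 with hvp
  set vm : Fin N → ℝ := fun x => (|v x| - v x) / 2 with hvm
  have hvpn : ∀ x, 0 ≤ vp x := fun x => by
    have := neg_abs_le (v x); simp only [hvp]; linarith
  have hvmn : ∀ x, 0 ≤ vm x := fun x => by
    have := le_abs_self (v x); simp only [hvm]; linarith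
  have hveq : ∀ x, v x = vp x - vm x := fun x => by simp [hvp, hvm]; ring
  set m : ℝ := (1/2) * ∑ x, |v x| with hm
  have hmp : ∑ x, vp x = m := by
    simp only [hvp, hm]
    rw [← Finset.sum_div, Finset.sum_add_distrib, hv]; ring
  have hmm : ∑ x, vm x = m := by
    simp only [hvm, hm]
    rw [← Finset.sum_div, Finset.sum_sub_distrib, hv]; ring
  have hm0 : 0 ≤ m := by
    rw [← hmp]; exact Finset.sum_nonneg fun x _ => hvpn x
  rcases eq_or_lt_of_le hm0 with hme | hmlt
  · -- m = 0 : all v x = 0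
    have hvz : ∀ x ∈ Finset.univ, |v x| = 0 := by
      intro x _
      have h := Finset.sum_eq_zero_iff_of_nonneg
        (fun x _ => abs_nonneg (v x)) |>.mp ?hz x (Finset.mem_univ x)
      · exact h
      · have : (∑ x, |v x|) = 0 := by
          have := hme; rw [hm] at this; linarith
        exact this
    have : ∀ y, ∑ x, P y x * v x = 0 := by
      intro y
      apply Finset.sum_eq_zero
      intro x _
      have : v x = 0 := abs_eq_zero.mp (hvz x (Finset.mem_univ x))
      simp [this]
    simp only [this, abs_zero, Finset.sum_const_zero, mul_zero]
    rw [← hme]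
    simp
  · -- m > 0
    have hNne : Nonempty (Fin N) := by
      rcases Nat.eq_zero_or_pos N with h | h
      · exfalso; subst h; simp at hmp; rw [← hmp] at hmlt; simp at hmlt
      · exact ⟨⟨0, h⟩⟩
    have hDnn : 0 ≤ D := by
      obtain ⟨x0⟩ := hNne
      have := hD x0 x0
      simp at this
      linarith [this]
    have hmne : m ≠ 0 := ne_of_gt hmlt
    -- key decomposition for each row y
    have key : ∀ y, ∑ x, P y x * v x
        = (1/m) * ∑ x, ∑ x', vp x * vm x' * (P y x - P y x') := by
      intro y
      have h1 : ∑ x, ∑ x', vp x * vm x' * (P y x - P y x')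
          = (∑ x, vp x * P y x) * (∑ x', vm x')
            - (∑ x, vp x) * (∑ x', vm x' * P y x') := by
        rw [Finset.sum_mul_sum, Finset.sum_mul_sum, ← Finset.sum_sub_distrib]
        refine Finset.sum_congr rfl fun x _ => ?_
        rw [← Finset.sum_sub_distrib]
        exact Finset.sum_congr rfl fun x' _ => by ring
      rw [h1, hmp, hmm]
      have h2 : ∑ x, P y x * v x = (∑ x, vp x * P y x) - (∑ x, vm x * P y x) := by
        rw [← Finset.sum_sub_distrib]
        refine Finset.sum_congr rfl fun x _ => ?_
        rw [hveq x]; ring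
      rw [h2]
      field_simp
    have bound1 : ∀ y, |∑ x, P y x * v x|
        ≤ (1/m) * ∑ x, ∑ x', vp x * vm x' * |P y x - P y x'| := by
      intro y
      rw [key y, abs_mul, abs_of_nonneg (by positivity : (0:ℝ) ≤ 1/m)]
      gcongr
      calc |∑ x, ∑ x', vp x * vm x' * (P y x - P y x')|
          ≤ ∑ x, |∑ x', vp x * vm x' * (P y x - P y x')| :=
            Finset.abs_sum_le_sum_abs _ _
        _ ≤ ∑ x, ∑ x', |vp x * vm x' * (P y x - P y x')| := by
            gcongr with x hx; exact Finset.abs_sum_le_sum_abs _ _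
        _ = ∑ x, ∑ x', vp x * vm x' * |P y x - P y x'| := by
            refine Finset.sum_congr rfl fun x _ => Finset.sum_congr rfl fun x' _ => ?_
            rw [abs_mul, abs_mul, abs_of_nonneg (hvpn x), abs_of_nonneg (hvmn x')]
    calc (1/2) * ∑ y, |∑ x, P y x * v x|
        ≤ (1/2) * ∑ y, (1/m) * ∑ x, ∑ x', vp x * vm x' * |P y x - P y x'| := by
          gcongr with y hy
          simpa [one_div] using bound1 y
      _ = (1/m) * ∑ x, ∑ x', vp x * vm x' * ((1/2) * ∑ y, |P y x - P y x'|) := by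
          simp only [Finset.mul_sum]
          rw [Finset.sum_comm]
          refine Finset.sum_congr rfl fun x _ => ?_
          rw [Finset.sum_comm]
          refine Finset.sum_congr rfl fun x' _ => ?_
          refine Finset.sum_congr rfl fun y _ => ?_
          ring
      _ ≤ (1/m) * ∑ x, ∑ x', vp x * vm x' * D := by
          gcongr with x hx x' hx'
          · exact mul_nonneg (hvpn x) (hvmn x')
          · exact hD x x'
      _ = D * m := by
          have hs : ∑ x, ∑ x', vp x * vm x' * D = (∑ x, vp x) * (∑ x', vm x') * D := by
            rw [Finset.sum_mul_sum, Finset.sum_mul]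
            refine Finset.sum_congr rfl fun x _ => ?_
            rw [Finset.sum_mul]
          rw [hs, hmp, hmm]
          field_simp
      _ = D * ((1/2) * ∑ x, |v x|) := by rw [hm]

/-- Columns of powers of a column-stochastic matrix sum to 1. -/
lemma pow_col_sum {N : ℕ} (Q : Matrix (Fin N) (Fin N) ℝ)
    (hstoch : ∀ x, ∑ y, Q y x = 1) (t : ℕ) (x : Fin N) :
    ∑ y, (Q ^ t) y x = 1 := by
  induction t generalizing x with
  | zero => simp [Matrix.one_apply]
  | succ t ih =>
    rw [pow_succ]
    simp only [Matrix.mul_apply]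
    rw [Finset.sum_comm]
    calc ∑ z, ∑ y, (Q ^ t) y z * Q z x
        = ∑ z, (∑ y, (Q ^ t) y z) * Q z x := by
          refine Finset.sum_congr rfl fun z _ => ?_
          rw [Finset.sum_mul]
      _ = ∑ z, Q z x := by
          refine Finset.sum_congr rfl fun z _ => ?_
          rw [ih z, one_mul]
      _ = 1 := hstoch x

/-- Submultiplicativity of the maximum pairwise column total-variation distance
`d̄(t) = max_{x,x'} (1/2)‖Q^t(·,x) − Q^t(·,x')‖₁` of a column-stochastic matrix:
`d̄(s+t) ≤ d̄(s) · d̄(t)`. -/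
theorem stmt1 {N : ℕ} (Q : Matrix (Fin N) (Fin N) ℝ)
    (hnonneg : ∀ y x, 0 ≤ Q y x) (hstoch : ∀ x, ∑ y, Q y x = 1)
    (dbar : ℕ → ℝ)
    (hdbar : ∀ t, dbar t = ⨆ x : Fin N, ⨆ x' : Fin N,
      (1/2) * ∑ y, |(Q ^ t) y x - (Q ^ t) y x'|)
    (s t : ℕ) :
    dbar (s + t) ≤ dbar s * dbar t := by
  rcases Nat.eq_zero_or_pos N with hN | hN
  · subst hN
    simp [hdbar, Real.iSup_of_isEmpty]
  · have hNe : Nonempty (Fin N) := ⟨⟨0, hN⟩⟩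
    have hterm_le : ∀ (u : ℕ) (x x' : Fin N),
        (1/2) * ∑ y, |(Q ^ u) y x - (Q ^ u) y x'| ≤ dbar u := by
      intro u x x'
      rw [hdbar]
      refine le_trans (le_ciSup (f := fun x' : Fin N =>
          (1/2) * ∑ y, |(Q ^ u) y x - (Q ^ u) y x'|)
          (Set.Finite.bddAbove (Set.finite_range _)) x') ?_
      exact le_ciSup (f := fun x : Fin N => ⨆ x' : Fin N,
          (1/2) * ∑ y, |(Q ^ u) y x - (Q ^ u) y x'|)
          (Set.Finite.bddAbove (Set.finite_range _)) x
    have hd0 : 0 ≤ dbar s := by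
      obtain ⟨x0⟩ := hNe
      refine le_trans ?_ (hterm_le s x0 x0)
      simp
    rw [hdbar (s + t)]
    refine ciSup_le fun x => ciSup_le fun x' => ?_
    set v : Fin N → ℝ := fun z => (Q ^ t) z x - (Q ^ t) z x' with hvdef
    have hv : ∑ z, v z = 0 := by
      simp only [hvdef]
      rw [Finset.sum_sub_distrib, pow_col_sum Q hstoch, pow_col_sum Q hstoch]
      ring
    have hentry : ∀ y, (Q ^ (s + t)) y x - (Q ^ (s + t)) y x'
        = ∑ z, (Q ^ s) y z * v z := by
      intro y
      rw [pow_add, Matrix.mul_apply, Matrix.mul_apply, ← Finset.sum_sub_distrib]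
      exact Finset.sum_congr rfl fun z _ => by simp only [hvdef]; ring
    calc (1/2) * ∑ y, |(Q ^ (s + t)) y x - (Q ^ (s + t)) y x'|
        = (1/2) * ∑ y, |∑ z, (Q ^ s) y z * v z| := by
          congr 1
          exact Finset.sum_congr rfl fun y _ => by rw [hentry y]
      _ ≤ dbar s * ((1/2) * ∑ z, |v z|) :=
          tv_contract (Q ^ s) (dbar s) (fun a b => hterm_le s a b) v hv
      _ ≤ dbar s * dbar t :=
          mul_le_mul_of_nonneg_left (hterm_le t x x') hd0
end

section
/- Let d ≥ 1 be fixed and p > 4d be prime. Let λ_k := (1/d)Σ_{j=1}^d cos(2πk_j/p) for k ∈ ℤ_p^d be the eigenvalues of the standard transition matrix of the torus ℤ_p^d. If λ_k = λ_l for k, l ∈ ℤ_p^d, then l is obtained from k by a permutation of coordinates together with sign changes of coordinates. -/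
/-!
With `ζ = exp (2πi/p)` one has `2 cos (2πa/p) = ζ^a + ζ^(-a)`, so equal cosine sums give
`∑ₐ (w_k(a) - w_l(a)) ζ^a = 0`, where `w_m(a)` counts the coordinates of `m` equal to `a`
or `-a`; the coefficients also sum to zero. The cyclotomic polynomial `Φ_p` is the minimal
polynomial of `ζ` over `ℚ`, and `(X - 1) Φ_p = X^p - 1` has degree `p`, so a rational
polynomial of degree `< p` vanishing at `1` and `ζ` is zero: hence `w_k = w_l`. Then the
squares `k_j²` and `l_j²` occur with the same multiplicities, and `a² = b² ↔ a = ±b` in the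
field `ZMod p`.
-/

open Finset Polynomial

theorem Polynomial.eq_zero_of_isRoot_one_of_aeval_primitiveRoot {K : Type*} [Field K] [CharZero K]
    {p : ℕ} [hp : Fact p.Prime] {ζ : K} (hζ : IsPrimitiveRoot ζ p) {P : ℚ[X]}
    (hdeg : P.natDegree < p) (h₁ : P.IsRoot 1) (hζP : aeval ζ P = 0) : P = 0 := by
  have hΦ : cyclotomic p ℚ ∣ P := by
    rw [cyclotomic_eq_minpoly_rat hζ hp.out.pos]
    exact minpoly.dvd ℚ ζ hζP
  have hX : cyclotomic 1 ℚ ∣ P := by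
    rwa [cyclotomic_one, ← C_1, dvd_iff_isRoot]
  have hcop : IsCoprime (cyclotomic p ℚ) (cyclotomic 1 ℚ) :=
    cyclotomic.isCoprime_rat hp.out.one_lt.ne'
  refine eq_zero_of_dvd_of_natDegree_lt (hcop.mul_dvd hΦ hX) ?_
  rwa [cyclotomic_one, cyclotomic_prime_mul_X_sub_one, ← C_1, natDegree_X_pow_sub_C]

theorem Polynomial.coeff_sum_C_mul_X_pow_val {R : Type*} [Semiring R] {n : ℕ} [NeZero n]
    (c : ZMod n → R) (b : ZMod n) :
    (∑ a, C (c a) * X ^ a.val).coeff b.val = c b := by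
  simp only [finsetSum_coeff, coeff_C_mul_X_pow, (ZMod.val_injective n).eq_iff,
    Finset.sum_ite_eq, Finset.mem_univ, if_true]

theorem Polynomial.natDegree_sum_C_mul_X_pow_val_lt {R : Type*} [Semiring R] {n : ℕ} [NeZero n]
    (c : ZMod n → R) : (∑ a, C (c a) * X ^ a.val).natDegree < n := by
  refine lt_of_le_of_lt (natDegree_sum_le_of_forall_le _ _ (n := n - 1) fun a _ => ?_)
    (Nat.sub_lt (NeZero.pos n) one_pos)
  exact (natDegree_C_mul_X_pow_le _ _).trans (Nat.le_sub_one_of_lt a.val_lt)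

theorem IsPrimitiveRoot.eq_of_sum_nsmul_pow_val_eq {K : Type*} [Field K] [CharZero K]
    {p : ℕ} [Fact p.Prime] {ζ : K} (hζ : IsPrimitiveRoot ζ p) {w w' : ZMod p → ℕ}
    (hsum : ∑ a, w a = ∑ a, w' a)
    (hζsum : ∑ a, w a • ζ ^ a.val = ∑ a, w' a • ζ ^ a.val) :
    w = w' := by
  set P : ℚ[X] := ∑ a, C ((w a : ℚ) - w' a) * X ^ a.val
  have hP : P = 0 := by
    refine eq_zero_of_isRoot_one_of_aeval_primitiveRoot hζ
      (natDegree_sum_C_mul_X_pow_val_lt _) ?_ ?_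
    · simp only [P, IsRoot, eval_finsetSum, eval_mul, eval_C, eval_pow, eval_X, one_pow,
        mul_one, sum_sub_distrib, sub_eq_zero]
      exact_mod_cast hsum
    · simp only [P, map_sum, map_mul, map_pow, aeval_X, map_sub, map_natCast,
        sub_mul, sum_sub_distrib, sub_eq_zero]
      simpa only [nsmul_eq_mul] using hζsum
  funext b
  have hb := congrArg (coeff · b.val) hP
  simp only [P, coeff_sum_C_mul_X_pow_val, coeff_zero, sub_eq_zero] at hb
  exact_mod_cast hb

theorem Equiv.exists_perm_apply_eq_of_card_fiber_eq {ι β : Type*} [Fintype ι] [DecidableEq β]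
    {f g : ι → β} (h : ∀ b, #{i | f i = b} = #{i | g i = b}) :
    ∃ σ : Equiv.Perm ι, ∀ i, g i = f (σ i) :=
  ⟨Equiv.ofFiberEquiv fun b => Fintype.equivOfCardEq <| by
      simp only [Fintype.card_subtype, h b],
    fun i => (Equiv.ofFiberEquiv_map _ i).symm⟩

section PairCount

variable {ι G : Type*} [Fintype ι] [AddCommGroup G] [Fintype G] [DecidableEq G]

-- A coordinate equal to `a = -a` is counted twice.
def pairCount (m : ι → G) (a : G) : ℕ := #{j | m j = a} + #{j | m j = -a}

theorem sum_add_neg_eq_sum_pairCount_smul {M : Type*} [AddCommMonoid M] (m : ι → G)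
    (φ : G → M) : ∑ j, (φ (m j) + φ (-m j)) = ∑ a, pairCount m a • φ a := by
  have hfib : ∀ ψ : G → M, ∑ j, ψ (m j) = ∑ a, #{j | m j = a} • ψ a := fun ψ => by
    rw [← sum_fiberwise' univ m ψ]
    simp only [sum_const]
  rw [sum_add_distrib, hfib, hfib (fun a => φ (-a)), Fintype.sum_equiv (Equiv.neg G)
    (fun a => #{j | m j = a} • φ (-a)) (fun a => #{j | m j = -a} • φ a)
    fun a => by simp only [Equiv.neg_apply, neg_neg]]
  simp only [pairCount, add_smul, sum_add_distrib]

end PairCount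

theorem exists_perm_eq_or_eq_neg_of_pairCount_eq {ι R : Type*} [Fintype ι] [CommRing R]
    [NoZeroDivisors R] [Fintype R] [DecidableEq R] {k l : ι → R}
    (h : pairCount k = pairCount l) :
    ∃ σ : Equiv.Perm ι, ∀ i, l i = k (σ i) ∨ l i = -k (σ i) := by
  have hsq : ∀ m : ι → R, ∀ b, ∑ a, pairCount m a • (if a ^ 2 = b then 1 else 0) =
      2 * #{j | m j ^ 2 = b} := fun m b => by
    simp only [← sum_add_neg_eq_sum_pairCount_smul, neg_sq, two_mul, card_filter,
      sum_add_distrib]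
  obtain ⟨σ, hσ⟩ := Equiv.exists_perm_apply_eq_of_card_fiber_eq (f := fun j => k j ^ 2)
    (g := fun j => l j ^ 2) fun b => by
      have := hsq k b
      rw [h, hsq l b] at this
      omega
  exact ⟨σ, fun i => sq_eq_sq_iff_eq_or_eq_neg.mp (hσ i)⟩

open Complex in
theorem exp_two_pi_I_div_pow_val_add_pow_val_neg {n : ℕ} [NeZero n] (a : ZMod n) :
    exp (2 * Real.pi * I / n) ^ a.val + exp (2 * Real.pi * I / n) ^ (-a).val =
      2 * Real.cos (2 * Real.pi * a.val / n) := by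
  let ψ := AddChar.zmodChar n ((isPrimitiveRoot_exp n (NeZero.ne n)).pow_eq_one)
  have hψ : ∀ b, ψ b = exp (2 * Real.pi * I / n) ^ b.val := AddChar.zmodChar_apply _
  have hre : (ψ a).re = Real.cos (2 * Real.pi * a.val / n) := by
    rw [hψ, ← exp_nat_mul, ← exp_ofReal_mul_I_re]
    push_cast
    ring_nf
  rw [← hψ, ← hψ, AddChar.map_neg_eq_conj, add_conj, hre, ofReal_mul, ofReal_ofNat]

theorem exists_perm_eq_or_eq_neg_of_sum_cos_eq {ι : Type*} [Fintype ι] {p : ℕ} [Fact p.Prime]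
    (k l : ι → ZMod p)
    (h : ∑ j, Real.cos (2 * Real.pi * (k j).val / p) =
      ∑ j, Real.cos (2 * Real.pi * (l j).val / p)) :
    ∃ σ : Equiv.Perm ι, ∀ i, l i = k (σ i) ∨ l i = -k (σ i) := by
  set ζ := Complex.exp (2 * Real.pi * Complex.I / p)
  have hζ : IsPrimitiveRoot ζ p := Complex.isPrimitiveRoot_exp p (NeZero.ne p)
  refine exists_perm_eq_or_eq_neg_of_pairCount_eq (hζ.eq_of_sum_nsmul_pow_val_eq ?_ ?_)
  · simpa only [nsmul_eq_mul, Nat.cast_id, mul_one] using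
      (sum_add_neg_eq_sum_pairCount_smul k fun _ => (1 : ℕ)).symm.trans
        (sum_add_neg_eq_sum_pairCount_smul l fun _ => (1 : ℕ))
  · simp only [← sum_add_neg_eq_sum_pairCount_smul, ζ, exp_two_pi_I_div_pow_val_add_pow_val_neg,
      ← mul_sum, ← Complex.ofReal_sum, h]

theorem stmt16_general {d p : ℕ} (hd : 1 ≤ d) (hp : p.Prime)
    (k l : Fin d → ZMod p)
    (heq : (1 / (d : ℝ)) * ∑ j, Real.cos (2 * Real.pi * ((k j).val : ℝ) / p) =
           (1 / (d : ℝ)) * ∑ j, Real.cos (2 * Real.pi * ((l j).val : ℝ) / p)) :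
    ∃ σ : Equiv.Perm (Fin d), ∀ i, l i = k (σ i) ∨ l i = -k (σ i) := by
  have := Fact.mk hp
  have hd₀ : (1 / (d : ℝ)) ≠ 0 := one_div_ne_zero (by positivity)
  exact exists_perm_eq_or_eq_neg_of_sum_cos_eq k l (mul_left_cancel₀ hd₀ heq)

/-- Eigenvalue multiplicities for the torus `ℤ_p^d`, `p > 4d` prime: if
`λ_k = λ_l` where `λ_k = (1/d)Σ_j cos(2πk_j/p)`, then `l` is obtained from `k` by a
permutation of the coordinates together with sign changes of coordinates. -/
theorem stmt16 {d p : ℕ} (hd : 1 ≤ d) (hp : p.Prime) (hpd : 4 * d < p)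
    (k l : Fin d → ZMod p)
    (heq : (1 / (d : ℝ)) * ∑ j, Real.cos (2 * Real.pi * ((k j).val : ℝ) / p) =
           (1 / (d : ℝ)) * ∑ j, Real.cos (2 * Real.pi * ((l j).val : ℝ) / p)) :
    ∃ σ : Equiv.Perm (Fin d), ∀ i, l i = k (σ i) ∨ l i = -k (σ i) :=
  stmt16_general hd hp k l heq
end

section
/- Let d ≥ 1 be fixed, p prime with p > 4d, N = p^d, and let P be the standard transition matrix on the torus ℤ_p^d. Then every entry of the infinite-time Cesaro matrix Π of the quantum walk e^{−iPt} is bounded below by Ω(1/N): there is a constant c(d) > 0 (depending only on d) with Π(y,x) ≥ c(d)/N for all x, y. -/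
/-!
Write `e(w) = exp(2πi w/p)` and `z = y - x`; the `k`-th summand is `e(k·z)/N`. If two characters
`k, l` have the same eigenvalue then every `l i` is `± k j` for some `j`: otherwise
`∑ (X^{k j} + X^{-k j}) - ∑ (X^{l j} + X^{-l j})` is a nonzero rational polynomial of degree
`< p` vanishing at a primitive `p`-th root of unity, so it is a rational multiple of `Φ_p`, and
it also vanishes at `1` where `Φ_p(1) = p`. By pigeonhole at least `p/(6d)^d` residues `m` have
every `m z_j` within `p/(6d)` of `0`. If all coordinates of `k₀` are such residues, then every
`k` in the eigenvalue class of `k₀` has `k·z` within `p/6` of `0`, so `Re e(k·z) ≥ 1/2` and the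
class sum has modulus at least its size over `2N`. There are at least
`(p/(6d)^d)^d = N/(6d)^{d²}` such `k₀`.
-/

open Finset Polynomial Real

namespace ZMod

variable {n : ℕ} [NeZero n]

lemma stdAddChar_intCast_re (W : ℤ) :
    (stdAddChar (W : ZMod n)).re = cos (2 * π * W / n) := by
  have : 2 * π * Complex.I * W / n = ((2 * π * W / n : ℝ) : ℂ) * Complex.I := by
    push_cast; ring
  rw [stdAddChar_coe, this, Complex.exp_ofReal_mul_I_re]

lemma stdAddChar_re (w : ZMod n) : (stdAddChar w).re = cos (2 * π * w.val / n) := by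
  simpa using stdAddChar_intCast_re (n := n) w.val

lemma half_le_stdAddChar_intCast_re {W : ℤ} (hW : |W| * 6 ≤ n) :
    1 / 2 ≤ (stdAddChar (W : ZMod n)).re := by
  have hn : (0 : ℝ) < n := by exact_mod_cast Nat.pos_of_neZero n
  have hW' : |(W : ℝ)| * 6 ≤ n := by exact_mod_cast hW
  have hθ : |2 * π * W / n| ≤ π / 3 := by
    rw [abs_div, abs_mul, abs_of_pos (by positivity : 0 < 2 * π), abs_of_pos hn,
      div_le_iff₀ hn]
    nlinarith [pi_pos]
  rw [stdAddChar_intCast_re, ← cos_abs, ← cos_pi_div_three]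
  exact cos_le_cos_of_nonneg_of_le_pi (abs_nonneg _) (by linarith [pi_pos]) hθ

lemma stdAddChar_pow_val (w : ZMod n) : stdAddChar (1 : ZMod n) ^ w.val = stdAddChar w := by
  rw [← AddChar.map_nsmul_eq_pow, nsmul_eq_mul, mul_one, natCast_zmod_val]

lemma isPrimitiveRoot_stdAddChar_one : IsPrimitiveRoot (stdAddChar (1 : ZMod n)) n := by
  have h := stdAddChar_coe (N := n) 1
  rw [Int.cast_one, Int.cast_one, mul_one] at h
  exact h ▸ Complex.isPrimitiveRoot_exp n (NeZero.ne n)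

lemma exp_val_eq_stdAddChar (u : ZMod n) :
    Complex.exp (2 * π * Complex.I * ((u.val : ℝ) : ℂ) / n) = stdAddChar u := by
  rw [stdAddChar_apply, toCircle_apply]
  push_cast
  rfl

lemma mul_exp_val_mul_conj (c : ℝ) (u v : ZMod n) :
    (c : ℂ) * Complex.exp (2 * π * Complex.I * ((u.val : ℝ) : ℂ) / n) *
        starRingEnd ℂ ((c : ℂ) * Complex.exp (2 * π * Complex.I * ((v.val : ℝ) : ℂ) / n)) =
      ((c ^ 2 : ℝ) : ℂ) * stdAddChar (u - v) := by
  rw [exp_val_eq_stdAddChar, exp_val_eq_stdAddChar, map_mul, Complex.conj_ofReal,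
    ← AddChar.map_neg_eq_conj, sub_eq_add_neg, AddChar.map_add_eq_mul]
  push_cast
  ring

end ZMod

lemma Polynomial.eq_zero_of_aeval_primitiveRoot_of_eval_one {K : Type*} [Field K] [CharZero K]
    {p : ℕ} (hp : p.Prime) {μ : K} (hμ : IsPrimitiveRoot μ p) {q : ℚ[X]}
    (hdeg : q.natDegree < p) (hμq : aeval μ q = 0) (h1 : q.eval 1 = 0) : q = 0 := by
  have := Fact.mk hp
  by_contra hq
  obtain ⟨r, rfl⟩ : cyclotomic p ℚ ∣ q :=
    cyclotomic_eq_minpoly_rat hμ hp.pos ▸ minpoly.dvd ℚ μ hμq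
  have hr : r ≠ 0 := right_ne_zero_of_mul hq
  rw [natDegree_mul (cyclotomic_ne_zero p ℚ) hr, natDegree_cyclotomic,
    Nat.totient_prime hp] at hdeg
  obtain ⟨t, rfl⟩ := natDegree_eq_zero.mp (by omega : r.natDegree = 0)
  rw [eval_mul, eval_one_cyclotomic_prime, eval_C, mul_eq_zero] at h1
  simp_all [hp.ne_zero]

section CosPolynomial

variable {ι : Type*} [Fintype ι] {p : ℕ}

noncomputable def cosPolynomial (k : ι → ZMod p) : ℚ[X] :=
  ∑ j, (X ^ (k j).val + X ^ (-k j).val)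

lemma natDegree_cosPolynomial_lt [NeZero p] (k : ι → ZMod p) :
    (cosPolynomial k).natDegree < p := by
  refine lt_of_le_of_lt (natDegree_sum_le_of_forall_le _ _ fun j _ => ?_)
    (Nat.sub_lt (Nat.pos_of_neZero p) one_pos)
  refine (natDegree_add_le _ _).trans (max_le ?_ ?_) <;>
    exact (natDegree_X_pow_le _).trans (Nat.le_sub_one_of_lt (ZMod.val_lt _))

lemma cosPolynomial_eval_one (k : ι → ZMod p) :
    (cosPolynomial k).eval 1 = 2 * Fintype.card ι := by
  simp [cosPolynomial, eval_finsetSum]; ring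

lemma aeval_cosPolynomial [NeZero p] (k : ι → ZMod p) :
    aeval (ZMod.stdAddChar (1 : ZMod p)) (cosPolynomial k) =
      ((2 * ∑ j, cos (2 * π * (k j).val / p) : ℝ) : ℂ) := by
  simp only [cosPolynomial, map_sum, map_add, map_pow, aeval_X, ZMod.stdAddChar_pow_val,
    AddChar.map_neg_eq_conj, Complex.add_conj, ZMod.stdAddChar_re]
  push_cast
  rw [mul_sum]

lemma cosPolynomial_coeff_ne_zero_iff (k : ι → ZMod p) (e : ℕ) :
    (cosPolynomial k).coeff e ≠ 0 ↔ ∃ j, e = (k j).val ∨ e = (-k j).val := by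
  simp only [cosPolynomial, finsetSum_coeff, coeff_add, coeff_X_pow]
  rw [Ne, sum_eq_zero_iff_of_nonneg (fun j _ => by positivity)]
  push Not
  refine ⟨fun ⟨j, _, hj⟩ => ⟨j, ?_⟩, fun ⟨j, hj⟩ => ⟨j, mem_univ j, ?_⟩⟩ <;>
    split_ifs at * <;> simp_all

theorem exists_eq_or_eq_neg_of_sum_cos_eq [NeZero p] (hp : p.Prime) {k l : ι → ZMod p}
    (h : ∑ j, cos (2 * π * (k j).val / p) = ∑ j, cos (2 * π * (l j).val / p)) (i : ι) :
    ∃ j, l i = k j ∨ l i = -k j := by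
  have hkl : cosPolynomial k = cosPolynomial l := by
    rw [← sub_eq_zero]
    refine eq_zero_of_aeval_primitiveRoot_of_eval_one hp ZMod.isPrimitiveRoot_stdAddChar_one
      ((natDegree_sub_le _ _).trans_lt (max_lt (natDegree_cosPolynomial_lt k)
        (natDegree_cosPolynomial_lt l))) ?_ ?_
    · rw [map_sub, aeval_cosPolynomial, aeval_cosPolynomial, h, sub_self]
    · rw [eval_sub, cosPolynomial_eval_one, cosPolynomial_eval_one, sub_self]
  have hi : (cosPolynomial k).coeff (l i).val ≠ 0 :=
    hkl ▸ (cosPolynomial_coeff_ne_zero_iff l _).mpr ⟨i, Or.inl rfl⟩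
  obtain ⟨j, hj⟩ := (cosPolynomial_coeff_ne_zero_iff k _).mp hi
  exact ⟨j, hj.imp (fun h => ZMod.val_injective p h) (fun h => ZMod.val_injective p h)⟩

end CosPolynomial

lemma Nat.abs_sub_lt_of_div_eq {a b n : ℕ} (hn : 0 < n) (h : a / n = b / n) :
    |(a : ℤ) - b| < n := by
  have ha := Nat.div_add_mod a n
  have hb := Nat.div_add_mod b n
  have := Nat.mod_lt a hn
  have := Nat.mod_lt b hn
  rw [h] at ha
  generalize n * (b / n) = c at ha hb
  rw [abs_lt]
  omega

section Bohr

variable {ι : Type*} [Fintype ι] {n : ℕ} [NeZero n]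

open Classical in
noncomputable def bohrSet (z : ι → ZMod n) (M : ℕ) : Finset (ZMod n) :=
  {m | ∀ j, ∃ W : ℤ, (W : ZMod n) = m * z j ∧ |W| * M < n}

@[simp]
lemma mem_bohrSet {z : ι → ZMod n} {M : ℕ} {m : ZMod n} :
    m ∈ bohrSet z M ↔ ∀ j, ∃ W : ℤ, (W : ZMod n) = m * z j ∧ |W| * M < n := by
  simp [bohrSet]

lemma le_card_bohrSet (z : ι → ZMod n) {M : ℕ} (hM : 0 < M) :
    n ≤ M ^ Fintype.card ι * #(bohrSet z M) := by
  classical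
  -- `box m j` records which of `M` equal arcs of `ZMod n` contains `m * z j`.
  let box : ZMod n → ι → Fin M := fun m j =>
    ⟨(m * z j).val * M / n,
      Nat.div_lt_of_lt_mul (Nat.mul_lt_mul_of_pos_right (ZMod.val_lt _) hM)⟩
  have : Nonempty (Fin M) := ⟨⟨0, hM⟩⟩
  have hMpos : (0 : ℚ) < (M ^ Fintype.card ι : ℕ) := by positivity
  obtain ⟨c, hc⟩ := Fintype.exists_le_card_fiber_of_nsmul_le_card box
    (b := (n : ℚ) / (M ^ Fintype.card ι : ℕ)) (by simp [ZMod.card, mul_div_cancel₀, hM.ne'])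
  rw [div_le_iff₀' hMpos] at hc
  replace hc : n ≤ M ^ Fintype.card ι * #{m | box m = c} := by exact_mod_cast hc
  obtain ⟨m₀, hm₀⟩ : ({m | box m = c} : Finset (ZMod n)).Nonempty :=
    card_pos.mp (Nat.pos_of_mul_pos_left ((Nat.pos_of_neZero n).trans_le hc))
  have hsub : ∀ m ∈ ({m | box m = c} : Finset (ZMod n)), m - m₀ ∈ bohrSet z M := by
    intro m hm
    simp only [mem_filter, mem_univ, true_and] at hm hm₀
    refine mem_bohrSet.mpr fun j => ?_
    have hj : (m * z j).val * M / n = (m₀ * z j).val * M / n := by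
      simpa [box] using congrFun (hm.trans hm₀.symm) j
    refine ⟨(m * z j).val - (m₀ * z j).val, ?_, ?_⟩
    · push_cast [ZMod.natCast_val, ZMod.cast_id]
      ring
    have := Nat.abs_sub_lt_of_div_eq (Nat.pos_of_neZero n) hj
    push_cast at this
    rwa [← sub_mul, abs_mul, abs_of_nonneg (Nat.cast_nonneg (α := ℤ) M)] at this
  have hcard := card_le_card_of_injOn (· - m₀) hsub (fun a _ b _ h => sub_left_injective h)
  exact hc.trans (Nat.mul_le_mul_left _ hcard)

end Bohr

lemma abs_sum_mul_le_of_forall_abs_mul_lt {ι : Type*} [Fintype ι] {W : ι → ℤ} {c n : ℕ}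
    (h : ∀ i, |W i| * (c * Fintype.card ι) < n) : |∑ i, W i| * c ≤ n := by
  rcases Nat.eq_zero_or_pos (Fintype.card ι) with hι | hι
  · have := Fintype.card_eq_zero_iff.mp hι
    simp
  · refine le_of_mul_le_mul_right ?_ (by exact_mod_cast hι : (0 : ℤ) < Fintype.card ι)
    calc |∑ i, W i| * c * Fintype.card ι ≤ ∑ i, |W i| * (c * Fintype.card ι) := by
          rw [mul_assoc, ← sum_mul]; gcongr; exact abs_sum_le_sum_abs _ _
      _ ≤ ∑ _i : ι, (n : ℤ) := sum_le_sum fun i _ => (h i).le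
      _ = n * Fintype.card ι := by rw [sum_const, card_univ, nsmul_eq_mul, mul_comm]

theorem half_le_stdAddChar_sum_mul_re {ι : Type*} [Fintype ι] {p : ℕ} [NeZero p] (hp : p.Prime)
    {z k₀ k : ι → ZMod p} (hk₀ : ∀ j, k₀ j ∈ bohrSet z (6 * Fintype.card ι))
    (h : ∑ j, cos (2 * π * (k₀ j).val / p) = ∑ j, cos (2 * π * (k j).val / p)) :
    1 / 2 ≤ (ZMod.stdAddChar (∑ j, k j * z j)).re := by
  have hW : ∀ i, ∃ W : ℤ, (W : ZMod p) = k i * z i ∧ |W| * (6 * Fintype.card ι) < p := by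
    intro i
    obtain ⟨m, hm⟩ := exists_eq_or_eq_neg_of_sum_cos_eq hp h i
    obtain ⟨W, hW, hWlt⟩ := mem_bohrSet.mp (hk₀ m) i
    rcases hm with hm | hm
    · exact ⟨W, by rw [hm, hW], hWlt⟩
    · exact ⟨-W, by rw [hm, Int.cast_neg, hW, neg_mul], by rwa [abs_neg]⟩
  choose W hWz hWlt using hW
  rw [show ∑ j, k j * z j = ((∑ j, W j : ℤ) : ZMod p) by push_cast [hWz]; rfl]
  exact ZMod.half_le_stdAddChar_intCast_re
    (by exact_mod_cast abs_sum_mul_le_of_forall_abs_mul_lt hWlt)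

theorem one_div_two_mul_pow_le_re_mul_conj {ι : Type*} [Fintype ι] {p : ℕ} [NeZero p]
    (hp : p.Prime) {x y k₀ k : ι → ZMod p}
    (hk₀ : ∀ j, k₀ j ∈ bohrSet (y - x) (6 * Fintype.card ι))
    (h : ∑ j, cos (2 * π * (k₀ j).val / p) = ∑ j, cos (2 * π * (k j).val / p)) :
    1 / (2 * (p : ℝ) ^ Fintype.card ι) ≤
      ((((1 / √((p : ℝ) ^ Fintype.card ι)) : ℝ) : ℂ) *
          Complex.exp (2 * π * Complex.I * ((∑ j, k j * y j).val : ℝ) / p) *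
        starRingEnd ℂ ((((1 / √((p : ℝ) ^ Fintype.card ι)) : ℝ) : ℂ) *
          Complex.exp (2 * π * Complex.I * ((∑ j, k j * x j).val : ℝ) / p))).re := by
  have hN : (0 : ℝ) < (p : ℝ) ^ Fintype.card ι := pow_pos (by exact_mod_cast hp.pos) _
  rw [ZMod.mul_exp_val_mul_conj, Complex.re_ofReal_mul, div_pow, one_pow, sq_sqrt hN.le,
    ← sum_sub_distrib]
  simp_rw [← mul_sub]
  calc 1 / (2 * (p : ℝ) ^ Fintype.card ι) = 1 / (p : ℝ) ^ Fintype.card ι * (1 / 2) := by ring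
    _ ≤ _ := by
      gcongr
      exact half_le_stdAddChar_sum_mul_re hp hk₀ h

lemma card_mul_sq_le_sum_norm_sq_fiber {α β : Type*} [Fintype α] [DecidableEq β]
    (f : α → β) (a : α → ℂ) (B : Finset α) {s : ℝ} (hs : 0 ≤ s)
    (h : ∀ k₀ ∈ B, ∀ k, f k = f k₀ → s ≤ (a k).re) :
    #B * s ^ 2 ≤ ∑ ev ∈ univ.image f, ‖∑ k with f k = ev, a k‖ ^ 2 := by
  have hfiber :
      ∀ ev ∈ B.image f, #{k ∈ B | f k = ev} * s ^ 2 ≤ ‖∑ k with f k = ev, a k‖ ^ 2 := by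
    intro ev hev
    obtain ⟨k₀, hk₀, rfl⟩ := mem_image.mp hev
    have hre : ∀ k ∈ ({k | f k = f k₀} : Finset α), s ≤ (a k).re := fun k hk =>
      h k₀ hk₀ k (mem_filter.mp hk).2
    have hcard : #{k ∈ B | f k = f k₀} ≤ #({k | f k = f k₀} : Finset α) :=
      card_le_card (filter_subset_filter _ (subset_univ B))
    have hpos : (1 : ℝ) ≤ #({k | f k = f k₀} : Finset α) := by
      exact_mod_cast card_pos.mpr ⟨k₀, by simp⟩
    have hsum : #({k | f k = f k₀} : Finset α) * s ≤ (∑ k with f k = f k₀, a k).re := by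
      rw [Complex.re_sum]
      simpa using card_nsmul_le_sum _ _ _ hre
    calc (#{k ∈ B | f k = f k₀} : ℝ) * s ^ 2
        ≤ #({k | f k = f k₀} : Finset α) * s ^ 2 := by gcongr
      _ ≤ (#({k | f k = f k₀} : Finset α) * s) ^ 2 := by nlinarith [sq_nonneg s]
      _ ≤ ‖∑ k with f k = f k₀, a k‖ ^ 2 := by
        gcongr
        exact hsum.trans (Complex.re_le_norm _)
  calc (#B : ℝ) * s ^ 2 = ∑ ev ∈ B.image f, #{k ∈ B | f k = ev} * s ^ 2 := by
        rw [card_eq_sum_card_image f B, Nat.cast_sum, sum_mul]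
    _ ≤ ∑ ev ∈ B.image f, ‖∑ k with f k = ev, a k‖ ^ 2 := sum_le_sum hfiber
    _ ≤ ∑ ev ∈ univ.image f, ‖∑ k with f k = ev, a k‖ ^ 2 :=
        sum_le_sum_of_subset_of_nonneg (image_subset_image (subset_univ B))
          (fun _ _ _ => by positivity)

/-- Amplification for the torus `ℤ_p^d`: for fixed `d ≥ 1` there is a constant
`c > 0` (depending only on `d`) such that for every prime `p > 4d`, with `N = p^d`,
every entry of the infinite-time Cesaro matrix
`Π(y,x) = Σ_j |Σ_{k∈C_j} ⟨y|φ_k⟩⟨φ_k|x⟩|²` of the quantum walk on `ℤ_p^d` —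
where `φ_k = N^{-1/2} Σ_x e^{2πi k·x/p}|x⟩` are the characters and the classes `C_j`
group indices `k` of equal eigenvalue `λ_k = (1/d)Σ_j cos(2πk_j/p)` — is at least
`c/N`. -/
theorem stmt17 (d : ℕ) (hd : 1 ≤ d) :
    ∃ c : ℝ, 0 < c ∧
      ∀ (p : ℕ) [NeZero p], p.Prime → 4 * d < p →
        ∀ y x : Fin d → ZMod p,
          c / (p : ℝ) ^ d ≤
            ∑ ev ∈ Finset.univ.image
                (fun k : Fin d → ZMod p =>
                  (1 / (d : ℝ)) * ∑ j, Real.cos (2 * Real.pi * ((k j).val : ℝ) / p)),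
              ‖(∑ k ∈ Finset.univ.filter
                    (fun k : Fin d → ZMod p =>
                      (1 / (d : ℝ)) * ∑ j, Real.cos (2 * Real.pi * ((k j).val : ℝ) / p) = ev),
                  ((1 / Real.sqrt ((p : ℝ) ^ d) : ℝ) *
                      Complex.exp (2 * Real.pi * Complex.I *
                        ((∑ j, k j * y j).val : ℝ) / p)) *
                    starRingEnd ℂ
                      ((1 / Real.sqrt ((p : ℝ) ^ d) : ℝ) *
                        Complex.exp (2 * Real.pi * Complex.I *
                          ((∑ j, k j * x j).val : ℝ) / p)))‖ ^ 2 := by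
  classical
  set K : ℝ := (((6 * d) ^ d : ℕ) : ℝ)
  refine ⟨1 / (4 * K ^ d), by positivity, fun p _ hp _ y x => ?_⟩
  set T := bohrSet (y - x) (6 * d)
  have hT : (p : ℝ) ≤ K * #T := by
    have := le_card_bohrSet (y - x) (by omega : 0 < 6 * d)
    rw [Fintype.card_fin] at this
    simp only [K, T]
    exact_mod_cast this
  have hN : (0 : ℝ) < (p : ℝ) ^ d := pow_pos (by exact_mod_cast hp.pos) d
  calc 1 / (4 * K ^ d) / (p : ℝ) ^ d
      ≤ #(Fintype.piFinset fun _ => T) * (1 / (2 * (p : ℝ) ^ d)) ^ 2 := by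
        have := mul_pow K #T d ▸ pow_le_pow_left₀ (Nat.cast_nonneg p) hT d
        rw [Fintype.card_piFinset_const T d, div_div, div_pow, one_pow, mul_one_div,
          div_le_div_iff₀ (by positivity) (by positivity)]
        push_cast
        nlinarith
    _ ≤ _ := by
        refine card_mul_sq_le_sum_norm_sq_fiber _ _ _ (by positivity) fun k₀ hk₀ k hk => ?_
        have hk₀T : ∀ j, k₀ j ∈ bohrSet (y - x) (6 * Fintype.card (Fin d)) := by
          rw [Fintype.card_fin]
          exact Fintype.mem_piFinset.mp hk₀
        simpa only [Fintype.card_fin] using one_div_two_mul_pow_le_re_mul_conj hp hk₀T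
          (mul_left_cancel₀ (by positivity) hk).symm
end

section
/- Let P be a symmetric irreducible stochastic matrix, let Π be the infinite-time Cesaro matrix of the quantum walk e^{−iPt} with α := max_{x,x'} (1/2)‖Π(·,x) − Π(·,x')‖₁ < 1, and suppose T is such that the finite-time Cesaro matrix P̄_T := (1/T)∫₀^T P_t dt satisfies (1/2)‖P̄_T − Π‖₁ ≤ (1−α)/4 (column-wise). Then for T' ≥ ⌈log_{2/(1+α)} ε⁻¹⌉, the T'-fold iterate (P̄_T)^{T'} maps every initial basis state to a distribution within total variation distance ε of the uniform distribution on the N states. -/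
open Matrix Filter

/-! Since `e^{-iPt}` is unitary, `|e^{-iPt}|²` and hence its time average `P̄_T` are doubly
stochastic.  Two columns of `P̄_T` are `ℓ¹`-close to the corresponding columns of `Π`, which are
at `ℓ¹`-distance at most `2α`, so they are at distance at most `1 + α`.  Dobrushin's coupling
argument then shows that `P̄_T` contracts the `ℓ¹`-norm of mean-zero vectors by `(1 + α)/2`;
applied `T'` times to `e_x - 𝟙/N` this gives `2 ((1 + α)/2)^{T'} ≤ 2ε`. -/

section Contraction

variable {n : Type*} [Fintype n]

lemma sum_mul_mulVec_sub_eq_sum_sum (A : Matrix n n ℝ) {p q : n → ℝ}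
    (hpq : ∑ x, q x = ∑ x, p x) (y : n) :
    (∑ x, p x) * (A *ᵥ (p - q)) y = ∑ x, ∑ x', p x * q x' * (A y x - A y x') := by
  calc (∑ x, p x) * (A *ᵥ (p - q)) y
      = (∑ x, A y x * p x) * (∑ x', q x') - (∑ x, p x) * ∑ x', A y x' * q x' := by
        simp only [mulVec, dotProduct, Pi.sub_apply, mul_sub, Finset.sum_sub_distrib, hpq]
        ring
    _ = _ := by
        simp only [Finset.sum_mul_sum, ← Finset.sum_sub_distrib]
        exact Finset.sum_congr rfl fun x _ => Finset.sum_congr rfl fun x' _ => by ring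

lemma sum_abs_mulVec_le_of_sum_eq_zero (A : Matrix n n ℝ) {β : ℝ}
    (hA : ∀ x x', ∑ y, |A y x - A y x'| ≤ 2 * β) {v : n → ℝ} (hv : ∑ x, v x = 0) :
    ∑ y, |(A *ᵥ v) y| ≤ β * ∑ x, |v x| := by
  set p : n → ℝ := fun x => (v x)⁺
  set q : n → ℝ := fun x => (v x)⁻
  set s := ∑ x, p x
  have hvpq : v = p - q := funext fun x => (posPart_sub_negPart (v x)).symm
  have hqs : ∑ x, q x = s := by
    simp only [hvpq, Pi.sub_apply, Finset.sum_sub_distrib] at hv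
    linarith
  have habs : ∑ x, |v x| = 2 * s := by
    simp only [← posPart_add_negPart, Finset.sum_add_distrib]
    rw [hqs]; ring
  have hs : 0 ≤ s := Finset.sum_nonneg fun x _ => posPart_nonneg _
  have hpq : ∀ x x', 0 ≤ p x * q x' := fun x x' =>
    mul_nonneg (posPart_nonneg (v x)) (negPart_nonneg (v x'))
  have hcoupling : s * ∑ y, |(A *ᵥ v) y| ≤ s * (β * ∑ x, |v x|) := calc
    s * ∑ y, |(A *ᵥ v) y| = ∑ y, |∑ x, ∑ x', p x * q x' * (A y x - A y x')| := by
      rw [Finset.mul_sum]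
      refine Finset.sum_congr rfl fun y _ => ?_
      rw [← sum_mul_mulVec_sub_eq_sum_sum A hqs, ← hvpq, abs_mul, abs_of_nonneg hs]
    _ ≤ ∑ y, ∑ x, ∑ x', p x * q x' * |A y x - A y x'| := by
      refine Finset.sum_le_sum fun y _ => (Finset.abs_sum_le_sum_abs _ _).trans <|
        Finset.sum_le_sum fun x _ => (Finset.abs_sum_le_sum_abs _ _).trans_eq <|
        Finset.sum_congr rfl fun x' _ => ?_
      rw [abs_mul, abs_of_nonneg (hpq x x')]
    _ = ∑ x, ∑ x', p x * q x' * ∑ y, |A y x - A y x'| := by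
      simp only [Finset.mul_sum]
      rw [Finset.sum_comm]
      exact Finset.sum_congr rfl fun x _ => Finset.sum_comm
    _ ≤ ∑ x, ∑ x', p x * q x' * (2 * β) :=
      Finset.sum_le_sum fun x _ => Finset.sum_le_sum fun x' _ =>
        mul_le_mul_of_nonneg_left (hA x x') (hpq x x')
    _ = s * (β * ∑ x, |v x|) := by
      simp only [← Finset.sum_mul]
      rw [← Finset.sum_mul_sum, hqs, habs]; ring
  rcases hs.eq_or_lt with hs0 | hs0
  · have hv0 : v = 0 := by
      have : ∀ x ∈ Finset.univ, |v x| = 0 :=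
        (Finset.sum_eq_zero_iff_of_nonneg fun x _ => abs_nonneg _).mp (by rw [habs, ← hs0]; ring)
      exact funext fun x => abs_eq_zero.mp (this x (Finset.mem_univ x))
    simp [hv0]
  · exact le_of_mul_le_mul_left hcoupling hs0

lemma sum_mulVec_eq_sum_of_vecMul_one (A : Matrix n n ℝ) (hcol : 1 ᵥ* A = 1) (v : n → ℝ) :
    ∑ y, (A *ᵥ v) y = ∑ x, v x := by
  rw [← one_dotProduct, dotProduct_mulVec, hcol, one_dotProduct]

variable [DecidableEq n]

lemma sum_abs_pow_mulVec_le_of_sum_eq_zero (A : Matrix n n ℝ) (hcol : 1 ᵥ* A = 1) {β : ℝ}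
    (hβ : 0 ≤ β) (hA : ∀ x x', ∑ y, |A y x - A y x'| ≤ 2 * β) {v : n → ℝ}
    (hv : ∑ x, v x = 0) (k : ℕ) :
    ∑ y, |(A ^ k *ᵥ v) y| ≤ β ^ k * ∑ x, |v x| := by
  induction k generalizing v with
  | zero => simp
  | succ k ih => calc
    ∑ y, |(A ^ (k + 1) *ᵥ v) y| = ∑ y, |(A ^ k *ᵥ (A *ᵥ v)) y| := by
      rw [pow_succ, ← mulVec_mulVec]
    _ ≤ β ^ k * ∑ y, |(A *ᵥ v) y| :=
      ih (by rw [sum_mulVec_eq_sum_of_vecMul_one A hcol, hv])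
    _ ≤ β ^ k * (β * ∑ x, |v x|) := by
      gcongr
      exact sum_abs_mulVec_le_of_sum_eq_zero A hA hv
    _ = β ^ (k + 1) * ∑ x, |v x| := by ring

lemma pow_mulVec_one_of_mulVec_one (A : Matrix n n ℝ) (hrow : A *ᵥ 1 = 1) (k : ℕ) :
    A ^ k *ᵥ 1 = 1 := by
  induction k with
  | zero => simp
  | succ k ih => rw [pow_succ, ← mulVec_mulVec, hrow, ih]

theorem sum_abs_pow_apply_sub_inv_card_le (A : Matrix n n ℝ) (hrow : A *ᵥ 1 = 1)
    (hcol : 1 ᵥ* A = 1) {β : ℝ} (hβ : 0 ≤ β) (hA : ∀ x x', ∑ y, |A y x - A y x'| ≤ 2 * β)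
    (k : ℕ) (x : n) :
    ∑ y, |(A ^ k) y x - (Fintype.card n : ℝ)⁻¹| ≤ 2 * β ^ k := by
  set u : ℝ := (Fintype.card n : ℝ)⁻¹
  have : Nonempty n := ⟨x⟩
  have hu : Fintype.card n * u = 1 := mul_inv_cancel₀ (Nat.cast_ne_zero.mpr Fintype.card_ne_zero)
  set v : n → ℝ := Pi.single x 1 - u • 1
  have hAv : A ^ k *ᵥ v = fun y => (A ^ k) y x - u := by
    ext y
    simp [v, mulVec_sub, mulVec_smul, pow_mulVec_one_of_mulVec_one A hrow]
  have hv : ∑ x, v x = 0 := by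
    simp [v, Finset.sum_sub_distrib, hu]
  have hv2 : ∑ x, |v x| ≤ 2 := calc
    ∑ x', |v x'| ≤ ∑ x', (|(Pi.single x 1 : n → ℝ) x'| + |u|) :=
      Finset.sum_le_sum fun x' _ => by simpa [v] using abs_sub _ _
    _ = 2 := by
      simp [Finset.sum_add_distrib, Pi.single_apply, apply_ite abs, abs_of_nonneg, u]
      norm_num
  calc ∑ y, |(A ^ k) y x - u| = ∑ y, |(A ^ k *ᵥ v) y| := by rw [hAv]
    _ ≤ β ^ k * ∑ x, |v x| := sum_abs_pow_mulVec_le_of_sum_eq_zero A hcol hβ hA hv k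
    _ ≤ 2 * β ^ k := by nlinarith [pow_nonneg hβ k]

end Contraction

lemma sum_abs_sub_le_add_add {ι : Type*} (s : Finset ι) (a b c d : ι → ℝ) :
    ∑ i ∈ s, |a i - b i| ≤
      ∑ i ∈ s, |a i - c i| + ∑ i ∈ s, |c i - d i| + ∑ i ∈ s, |b i - d i| := by
  simp only [← Finset.sum_add_distrib]
  exact Finset.sum_le_sum fun i _ => by
    linarith [abs_sub_le (a i) (c i) (d i), abs_sub_le (a i) (d i) (b i), abs_sub_comm (d i) (b i)]

lemma pow_le_of_logb_inv_le {β ε : ℝ} (hβ0 : 0 < β) (hβ1 : β < 1) (hε : 0 < ε) {k : ℕ}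
    (hk : Real.logb β⁻¹ ε⁻¹ ≤ k) : β ^ k ≤ ε := calc
  β ^ k = β ^ (k : ℝ) := (Real.rpow_natCast β k).symm
  _ ≤ β ^ Real.logb β⁻¹ ε⁻¹ := Real.rpow_le_rpow_of_exponent_ge hβ0 hβ1.le hk
  _ = (β⁻¹ ^ Real.logb β⁻¹ ε⁻¹)⁻¹ := by rw [Real.inv_rpow hβ0.le, inv_inv]
  _ = ε := by
    rw [Real.rpow_logb (inv_pos.mpr hβ0) (one_lt_inv₀ hβ0 |>.mpr hβ1).ne' (inv_pos.mpr hε), inv_inv]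

namespace Matrix

variable {n : Type*} [Fintype n] [DecidableEq n]

open NormedSpace in
lemma exp_mem_unitaryGroup_of_conjTranspose_eq_neg {A : Matrix n n ℂ} (hA : Aᴴ = -A) :
    exp A ∈ unitaryGroup n ℂ := by
  rw [mem_unitaryGroup_iff, star_eq_conjTranspose, ← exp_conjTranspose, hA,
    ← exp_add_of_commute _ _ (Commute.refl A).neg_right, add_neg_cancel, exp_zero]

lemma IsHermitian.exp_smul_mem_unitaryGroup {H : Matrix n n ℂ} (hH : H.IsHermitian) (t : ℝ) :
    NormedSpace.exp ((-(Complex.I * t)) • H) ∈ unitaryGroup n ℂ := by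
  refine exp_mem_unitaryGroup_of_conjTranspose_eq_neg ?_
  rw [conjTranspose_smul, hH.eq, ← neg_smul]
  simp [Complex.conj_I]

lemma sum_norm_sq_apply_of_mem_unitaryGroup {𝕜 : Type*} [RCLike 𝕜] {U : Matrix n n 𝕜}
    (hU : U ∈ unitaryGroup n 𝕜) (i : n) : ∑ j, ‖U i j‖ ^ 2 = 1 := by
  have h := congr_fun₂ (mem_unitaryGroup_iff.mp hU) i i
  simp only [mul_apply, star_apply, RCLike.star_def, RCLike.mul_conj, one_apply_eq] at h
  exact_mod_cast h

lemma sum_norm_sq_apply_of_mem_unitaryGroup' {𝕜 : Type*} [RCLike 𝕜] {U : Matrix n n 𝕜}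
    (hU : U ∈ unitaryGroup n 𝕜) (j : n) : ∑ i, ‖U i j‖ ^ 2 = 1 :=
  sum_norm_sq_apply_of_mem_unitaryGroup (transpose_mem_unitaryGroup_iff.mpr hU) j

open NormedSpace in
lemma continuous_exp : Continuous (exp : Matrix n n ℂ → Matrix n n ℂ) := by
  open scoped Matrix.Norms.Operator in exact exp_continuous

end Matrix

lemma sum_inv_mul_intervalIntegral_eq_one {ι : Type*} (s : Finset ι) {g : ι → ℝ → ℝ}
    (hg : ∀ i ∈ s, Continuous (g i)) (hsum : ∀ t, ∑ i ∈ s, g i t = 1) {T : ℝ} (hT : T ≠ 0) :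
    ∑ i ∈ s, 1 / T * ∫ t in (0 : ℝ)..T, g i t = 1 := by
  rw [← Finset.mul_sum, ← intervalIntegral.integral_finsetSum
    fun i hi => (hg i hi).intervalIntegrable _ _]
  simp [hsum, hT]

section Cesaro

open Matrix

variable {n : Type*} [Fintype n] [DecidableEq n]

noncomputable def quantumWalkCesaro (H : Matrix n n ℂ) (T : ℝ) : Matrix n n ℝ :=
  fun y x => 1 / T * ∫ t in (0 : ℝ)..T, ‖NormedSpace.exp ((-(Complex.I * t)) • H) y x‖ ^ 2

lemma continuous_norm_sq_exp_smul_apply (H : Matrix n n ℂ) (y x : n) :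
    Continuous fun t : ℝ => ‖NormedSpace.exp ((-(Complex.I * t)) • H) y x‖ ^ 2 := by
  have : Continuous fun t : ℝ => (-(Complex.I * t)) • H := by fun_prop
  exact (continuous_norm.comp ((Matrix.continuous_exp.comp this).matrix_elem y x)).pow 2

variable {H : Matrix n n ℂ} {T : ℝ}

lemma quantumWalkCesaro_mulVec_one (hH : H.IsHermitian) (hT : T ≠ 0) :
    quantumWalkCesaro H T *ᵥ 1 = 1 := by
  ext y
  simp only [mulVec, dotProduct, Pi.one_apply, mul_one, quantumWalkCesaro]
  exact sum_inv_mul_intervalIntegral_eq_one _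
    (fun x _ => continuous_norm_sq_exp_smul_apply H y x)
    (fun t => sum_norm_sq_apply_of_mem_unitaryGroup (hH.exp_smul_mem_unitaryGroup t) y) hT

lemma sum_quantumWalkCesaro_apply (hH : H.IsHermitian) (hT : T ≠ 0) (x : n) :
    ∑ y, quantumWalkCesaro H T y x = 1 :=
  sum_inv_mul_intervalIntegral_eq_one _
    (fun y _ => continuous_norm_sq_exp_smul_apply H y x)
    (fun t => sum_norm_sq_apply_of_mem_unitaryGroup' (hH.exp_smul_mem_unitaryGroup t) x) hT

lemma sum_apply_eq_one_of_tendsto_quantumWalkCesaro (hH : H.IsHermitian) {L : Matrix n n ℝ}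
    (hL : ∀ y x, Tendsto (fun T => quantumWalkCesaro H T y x) atTop (nhds (L y x))) (x : n) :
    ∑ y, L y x = 1 :=
  tendsto_nhds_unique (tendsto_finsetSum _ fun y _ => hL y x) <|
    tendsto_const_nhds.congr' <| (eventually_ne_atTop 0).mono fun _ hT =>
      (sum_quantumWalkCesaro_apply hH hT x).symm

lemma one_vecMul_quantumWalkCesaro (hH : H.IsHermitian) (hT : T ≠ 0) :
    1 ᵥ* quantumWalkCesaro H T = 1 := by
  ext x
  simpa [vecMul, dotProduct] using sum_quantumWalkCesaro_apply hH hT x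

end Cesaro

theorem stmt18_general {N : ℕ} (P : Matrix (Fin N) (Fin N) ℝ)
    (hsymm : P.IsSymm)
    (Pbar : ℝ → Matrix (Fin N) (Fin N) ℝ)
    (hPbar : ∀ (T : ℝ) (y x : Fin N), Pbar T y x = (1/T) * ∫ t in (0:ℝ)..T,
      ‖(NormedSpace.exp ((-(Complex.I * t)) • P.map Complex.ofReal)) y x‖ ^ 2)
    (Pi' : Matrix (Fin N) (Fin N) ℝ)
    (hPi : ∀ y x, Tendsto (fun T => Pbar T y x) atTop (nhds (Pi' y x)))
    (α : ℝ)
    (hα : α = ⨆ x : Fin N, ⨆ x' : Fin N, (1/2) * ∑ y, |Pi' y x - Pi' y x'|)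
    (hα1 : α < 1)
    (T : ℝ)
    (hT : ∀ x : Fin N, (1/2) * ∑ y, |Pbar T y x - Pi' y x| ≤ (1 - α) / 4)
    (ε : ℝ) (hε : 0 < ε)
    (T' : ℕ) (hT' : ⌈Real.logb (2 / (1 + α)) ε⁻¹⌉₊ ≤ T') :
    ∀ x : Fin N, (1/2) * ∑ y, |((Pbar T) ^ T') y x - (N : ℝ)⁻¹| ≤ ε := by
  obtain rfl : Pbar = quantumWalkCesaro (P.map Complex.ofReal) :=
    funext fun S => Matrix.ext (hPbar S)
  have hH : (P.map Complex.ofReal).IsHermitian :=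
    (isHermitian_iff_isSymm.mpr hsymm).map _ fun r => (Complex.conj_ofReal r).symm
  have hPi_dist : ∀ x x', ∑ y, |Pi' y x - Pi' y x'| ≤ 2 * α := fun x x' => by
    have := hα ▸ (le_ciSup (Finite.bddAbove_range _) x').trans
      (le_ciSup (Finite.bddAbove_range fun x => ⨆ x', (1/2) * ∑ y, |Pi' y x - Pi' y x'|) x)
    linarith
  intro x
  have hα0 : 0 ≤ α := by simpa using hPi_dist x x
  -- `P̄_0 = 0` (as `1 / 0 = 0`), while every column of `Π` has `ℓ¹`-norm at least `1`.
  have hT0 : T ≠ 0 := by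
    rintro rfl
    have hPi_abs : 1 ≤ ∑ y, |Pi' y x| := by
      rw [← sum_apply_eq_one_of_tendsto_quantumWalkCesaro hH hPi x]
      exact (le_abs_self _).trans (Finset.abs_sum_le_sum_abs _ _)
    have := hT x
    simp only [quantumWalkCesaro, div_zero, zero_mul, zero_sub, abs_neg] at this
    linarith
  set Q := quantumWalkCesaro (P.map Complex.ofReal) T
  have hQ_dist : ∀ x x', ∑ y, |Q y x - Q y x'| ≤ 2 * ((1 + α) / 2) := fun x x' => by
    linarith [sum_abs_sub_le_add_add Finset.univ (Q · x) (Q · x') (Pi' · x) (Pi' · x'),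
      hT x, hT x', hPi_dist x x']
  have hrate : ((1 + α) / 2) ^ T' ≤ ε := pow_le_of_logb_inv_le (by linarith) (by linarith) hε
    (by rw [inv_div]; exact Nat.ceil_le.mp hT')
  have := sum_abs_pow_apply_sub_inv_card_le Q (quantumWalkCesaro_mulVec_one hH hT0)
    (one_vecMul_quantumWalkCesaro hH hT0) (by linarith) hQ_dist T' x
  rw [Fintype.card_fin] at this
  linarith

/-- Convergence time of the double-loop quantum sampling algorithm: let `P` be a
symmetric irreducible stochastic matrix, `P̄_T` the finite-time Cesaro matrix of the
quantum walk `e^{−iPt}`, `Π = lim_{T→∞} P̄_T` the infinite-time Cesaro matrix with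
maximum pairwise column distance `α < 1`.  If `T` is such that each column of `P̄_T`
is within total variation distance `(1−α)/4` of the corresponding column of `Π`, then
for `T' ≥ ⌈log_{2/(1+α)} ε⁻¹⌉`, every column of `(P̄_T)^{T'}` is within total
variation distance `ε` of the uniform distribution. -/
theorem stmt18 {N : ℕ} (hN : 0 < N) (P : Matrix (Fin N) (Fin N) ℝ)
    (hsymm : P.IsSymm)
    (hnonneg : ∀ y x, 0 ≤ P y x) (hstoch : ∀ x, ∑ y, P y x = 1)
    (hirr : ∀ x y : Fin N, ∃ n : ℕ, 0 < (P ^ n) y x)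
    (Pbar : ℝ → Matrix (Fin N) (Fin N) ℝ)
    (hPbar : ∀ (T : ℝ) (y x : Fin N), Pbar T y x = (1/T) * ∫ t in (0:ℝ)..T,
      ‖(NormedSpace.exp ((-(Complex.I * t)) • P.map Complex.ofReal)) y x‖ ^ 2)
    (Pi' : Matrix (Fin N) (Fin N) ℝ)
    (hPi : ∀ y x, Tendsto (fun T => Pbar T y x) atTop (nhds (Pi' y x)))
    (α : ℝ)
    (hα : α = ⨆ x : Fin N, ⨆ x' : Fin N, (1/2) * ∑ y, |Pi' y x - Pi' y x'|)
    (hα1 : α < 1)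
    (T : ℝ)
    (hT : ∀ x : Fin N, (1/2) * ∑ y, |Pbar T y x - Pi' y x| ≤ (1 - α) / 4)
    (ε : ℝ) (hε : 0 < ε)
    (T' : ℕ) (hT' : ⌈Real.logb (2 / (1 + α)) ε⁻¹⌉₊ ≤ T') :
    ∀ x : Fin N, (1/2) * ∑ y, |((Pbar T) ^ T') y x - (N : ℝ)⁻¹| ≤ ε :=
  stmt18_general P hsymm Pbar hPbar Pi' hPi α hα hα1 T hT ε hε T' hT'
end
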